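/- arXiv:1508.02688 — 4 statements merged into one kernel-verified Lean document; each statement's English description precedes it below -/
import Mathlib

section
/- Let q be a power of an odd prime, let d = 2n+1 ≥ 3 be an odd integer, let k ≥ 2 be an integer, and suppose there exists i ∈ F_q with i² = −1. Let E = {(t_1, i t_1, t_2, i t_2, …, t_n, i t_n, s) : t_1, …, t_n, s ∈ F_q} ⊆ F_q^d. Then |E| = q^{(d+1)/2} and Δ_k(E) = {σ² : σ ∈ F_q}; in particular |Δ_k(E)| = (q+1)/2 < q, so Δ_k(E) ≠ F_q. -/
/-! Every point `(t₁, i t₁, …, t_n, i t_n, s)` of `E` has `‖x‖ = s²`, because `t² + (i t)² = 0`.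
Since `E` is the image of a linear map, it is closed under subtraction, so `Δ_k(E) = ‖E‖` is
exactly the set of squares. For odd `q` the nonzero squares form the index-two subgroup of the
cyclic group `𝔽_qˣ`, so there are `(q + 1) / 2` squares. -/

open Finset

/-- `‖x‖ = x₁² + ⋯ + x_d²` for `x ∈ 𝔽_q^d`. -/
def normF {F : Type*} [Field F] {d : ℕ} (x : Fin d → F) : F := ∑ i, x i ^ 2

/-- The `k`-resultant set `Δ_k(E) = {‖x¹ - x² - ⋯ - x^k‖ : xⁱ ∈ E}` (for `k ≥ 2`):
`y` plays the role of `x¹` and `x 0, …, x (k-2)` play the roles of `x², …, x^k`. -/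
def Delta {F : Type*} [Field F] {d : ℕ} (k : ℕ) (E : Set (Fin d → F)) : Set F :=
  {t | ∃ (y : Fin d → F) (x : Fin (k - 1) → Fin d → F),
    y ∈ E ∧ (∀ i, x i ∈ E) ∧ normF (y - ∑ i, x i) = t}

/-- The `2m`-energy `Λ_{2m}(E)`: the number of `2m`-tuples of points of `E`
whose first `m` entries and last `m` entries have equal sums. -/
noncomputable def energy {F : Type*} [Field F] {d : ℕ} (m : ℕ) (E : Set (Fin d → F)) : ℕ :=
  Nat.card {p : (Fin m → Fin d → F) × (Fin m → Fin d → F) //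
    (∀ i, p.1 i ∈ E) ∧ (∀ i, p.2 i ∈ E) ∧ (∑ i, p.1 i) = ∑ i, p.2 i}

/-- The (normalized) Fourier transform of the indicator function of `E ⊆ 𝔽_q^d`,
with respect to the additive character `χ`. -/
noncomputable def ftF {F : Type*} [Field F] [Fintype F] {d : ℕ} (χ : AddChar F ℂ)
    (E : Set (Fin d → F)) (m : Fin d → F) : ℂ :=
  ((Fintype.card F : ℂ) ^ d)⁻¹ *
    ∑ x : Fin d → F, Set.indicator E (fun y => χ (-(∑ i, m i * y i))) x

/-- `V ⊆ 𝔽_q^d` is `(c₁,c₂,c₃)`-regular (with respect to the character `χ`). -/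
def IsRegularVariety {F : Type*} [Field F] [Fintype F] {d : ℕ} (c1 c2 c3 : ℝ) (χ : AddChar F ℂ)
    (V : Set (Fin d → F)) : Prop :=
  c1 * (Fintype.card F : ℝ) ^ (d - 1) ≤ (Nat.card V : ℝ) ∧
  (Nat.card V : ℝ) ≤ c2 * (Fintype.card F : ℝ) ^ (d - 1) ∧
  ∀ m : Fin d → F, m ≠ 0 →
    ‖ftF χ V m‖ ≤ c3 * (Fintype.card F : ℝ) ^ (-(((d : ℝ) + 1) / 2))

/-- `V ⊆ 𝔽_q²` is a `(c₁,c₂,c₃)`-nondegenerate regular curve defined by a nonzero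
polynomial of total degree at most `n` (with respect to the character `χ`). -/
def IsNondegCurve {F : Type*} [Field F] [Fintype F] (c1 c2 c3 : ℝ) (χ : AddChar F ℂ)
    (n : ℕ) (V : Set (Fin 2 → F)) : Prop :=
  (∃ Q : MvPolynomial (Fin 2) F, Q ≠ 0 ∧ Q.totalDegree ≤ n ∧
      (¬∃ A B : MvPolynomial (Fin 2) F, A.totalDegree = 1 ∧ Q = A * B) ∧
      V = {x | MvPolynomial.eval x Q = 0}) ∧
  c1 * (Fintype.card F : ℝ) ≤ (Nat.card V : ℝ) ∧
  (Nat.card V : ℝ) ≤ c2 * (Fintype.card F : ℝ) ∧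
  ∀ m : Fin 2 → F, m ≠ 0 →
    ‖ftF χ V m‖ ≤ c3 * (Fintype.card F : ℝ) ^ (-(3 / 2) : ℝ)

theorem card_setOf_exists_eq_sq {F : Type*} [Field F] [Fintype F] (hF : Odd (Fintype.card F)) :
    Nat.card {u : F | ∃ σ, u = σ ^ 2} = (Fintype.card F + 1) / 2 := by
  have hsq : {u : F | ∃ σ, u = σ ^ 2} =
      insert 0 (Units.val '' ((powMonoidHom 2 : Fˣ →* Fˣ).range : Set Fˣ)) := by
    ext u
    rcases eq_or_ne u 0 with rfl | hu
    · exact iff_of_true ⟨0, by ring⟩ (Set.mem_insert _ _)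
    · simp only [Set.mem_ofPred_eq, Set.mem_insert_iff, hu, false_or, Set.mem_image,
        SetLike.mem_coe, MonoidHom.mem_range, powMonoidHom_apply]
      constructor
      · rintro ⟨σ, rfl⟩
        exact ⟨Units.mk0 σ (by rintro rfl; simp at hu) ^ 2, ⟨_, rfl⟩, by simp⟩
      · rintro ⟨_, ⟨v, rfl⟩, rfl⟩
        exact ⟨v, by simp⟩
  have hunits : Nat.card (powMonoidHom 2 : Fˣ →* Fˣ).range = (Fintype.card F - 1) / 2 := by
    rw [IsCyclic.card_powMonoidHom_range, Nat.card_units, Nat.card_eq_fintype_card,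
      Nat.gcd_eq_right (Nat.Odd.sub_odd hF odd_one).two_dvd]
  rw [hsq, Nat.card_coe_set_eq, Set.ncard_insert_of_notMem (by simp),
    Set.ncard_image_of_injective _ Units.val_injective, ← Nat.card_coe_set_eq]
  change Nat.card (powMonoidHom 2 : Fˣ →* Fˣ).range + 1 = _
  obtain ⟨m, hm⟩ := hF
  omega

theorem Fin.sum_univ_two_mul_add_one {M : Type*} [AddCommMonoid M] (n : ℕ)
    (f : Fin (2 * n + 1) → M) :
    ∑ m, f m = ∑ j : Fin n, (f ⟨2 * j, by omega⟩ + f ⟨2 * j + 1, by omega⟩) + f (Fin.last _) := by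
  induction n with
  | zero => simp
  | succ n ih =>
    rw [Fin.sum_univ_castSucc, Fin.sum_univ_castSucc (n := n)]
    erw [Fin.sum_univ_castSucc (n := 2 * n + 1), ih]
    simp only [add_assoc]
    rfl

theorem Fin.eq_last_or_exists_eq_two_mul {n : ℕ} (m : Fin (2 * n + 1)) :
    m = Fin.last _ ∨ ∃ j : Fin n, m = ⟨2 * j, by omega⟩ ∨ m = ⟨2 * j + 1, by omega⟩ := by
  by_cases hm : (m : ℕ) = 2 * n
  · exact Or.inl (Fin.ext hm)
  · refine Or.inr ⟨⟨m / 2, by omega⟩, ?_⟩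
    rcases Nat.mod_two_eq_zero_or_one m with h | h
    · exact Or.inl (Fin.ext (by simp only; omega))
    · exact Or.inr (Fin.ext (by simp only; omega))

theorem Delta_eq_image_normF {F : Type*} [Field F] {d : ℕ} (k : ℕ)
    (E : AddSubgroup (Fin d → F)) :
    Delta k (E : Set (Fin d → F)) = normF '' (E : Set (Fin d → F)) := by
  ext u
  constructor
  · rintro ⟨y, x, hy, hx, rfl⟩
    exact ⟨_, E.sub_mem hy (E.sum_mem fun l _ => hx l), rfl⟩
  · rintro ⟨y, hy, rfl⟩
    exact ⟨y, 0, hy, fun _ => E.zero_mem, by simp⟩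

section isotropic

variable {F : Type*} [Field F]

def isotropicParam (i : F) (n : ℕ) : ((Fin n → F) × F) →ₗ[F] (Fin (2 * n + 1) → F) where
  toFun p m :=
    if h : (m : ℕ) < 2 * n then (if (m : ℕ) % 2 = 0 then 1 else i) * p.1 ⟨m / 2, by omega⟩
    else p.2
  map_add' p p' := by
    ext m
    simp only [Prod.fst_add, Prod.snd_add, Pi.add_apply]
    split_ifs <;> ring
  map_smul' c p := by
    ext m
    simp only [Prod.smul_fst, Prod.smul_snd, Pi.smul_apply, smul_eq_mul, RingHom.id_apply]
    split_ifs <;> ring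

variable (i : F) {n : ℕ} (p : (Fin n → F) × F) (j : Fin n)

@[simp]
theorem isotropicParam_apply_two_mul : isotropicParam i n p ⟨2 * j, by omega⟩ = p.1 j := by
  simp [isotropicParam]

@[simp]
theorem isotropicParam_apply_two_mul_add_one :
    isotropicParam i n p ⟨2 * j + 1, by omega⟩ = i * p.1 j := by
  have hj : 2 * (j : ℕ) + 1 < 2 * n := by omega
  simp [isotropicParam, hj, Nat.mul_add_div]

@[simp]
theorem isotropicParam_apply_last : isotropicParam i n p (Fin.last _) = p.2 := by
  simp [isotropicParam]

theorem isotropicParam_injective : Function.Injective (isotropicParam i n) := by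
  intro p p' h
  refine Prod.ext (funext fun j => ?_) ?_
  · simpa using congrFun h ⟨2 * j, by omega⟩
  · simpa using congrFun h (Fin.last _)

theorem setOf_eq_range_isotropicParam :
    {x : Fin (2 * n + 1) → F | ∃ (t : Fin n → F) (s : F),
      (∀ j : Fin n, x ⟨2 * (j : ℕ), by omega⟩ = t j ∧ x ⟨2 * (j : ℕ) + 1, by omega⟩ = i * t j) ∧
      x ⟨2 * n, by omega⟩ = s} = Set.range (isotropicParam i n) := by
  ext x
  constructor
  · rintro ⟨t, s, ht, rfl⟩
    refine ⟨(t, x (Fin.last _)), funext fun m => ?_⟩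
    rcases Fin.eq_last_or_exists_eq_two_mul m with rfl | ⟨j, rfl | rfl⟩
    · simp
    · simp [(ht j).1]
    · simp [(ht j).2]
  · rintro ⟨p, rfl⟩
    exact ⟨p.1, p.2, fun j => ⟨by simp, by simp⟩, isotropicParam_apply_last i p⟩

theorem normF_isotropicParam (hi : i ^ 2 = -1) : normF (isotropicParam i n p) = p.2 ^ 2 := by
  simp [normF, Fin.sum_univ_two_mul_add_one, mul_pow, hi]

end isotropic

/-- for odd `d = 2n+1 ≥ 3`, `k ≥ 2`, and `i² = -1`, the set
`E = {(t₁, it₁, …, t_n, it_n, s)}` has `|E| = q^{(d+1)/2}`,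
`Δ_k(E) = {σ² : σ ∈ 𝔽_q}`, `|Δ_k(E)| = (q+1)/2 < q`, and `Δ_k(E) ≠ 𝔽_q`. -/
theorem stmt_0 {F : Type*} [Field F] [Fintype F] (q n k : ℕ)
    (hq : q = Fintype.card F) (hodd : Odd q)
    (i : F) (hi : i ^ 2 = -1)
    (E : Set (Fin (2 * n + 1) → F))
    (hE : E = {x | ∃ (t : Fin n → F) (s : F),
      (∀ j : Fin n, x ⟨2 * (j : ℕ), by have := j.isLt; omega⟩ = t j ∧
        x ⟨2 * (j : ℕ) + 1, by have := j.isLt; omega⟩ = i * t j) ∧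
      x ⟨2 * n, by omega⟩ = s}) :
    Nat.card E = q ^ (n + 1) ∧
    Delta k E = {u : F | ∃ σ : F, u = σ ^ 2} ∧
    Nat.card (Delta k E) = (q + 1) / 2 ∧
    (q + 1) / 2 < q ∧
    Delta k E ≠ Set.univ := by
  rw [setOf_eq_range_isotropicParam] at hE
  subst hE
  have hD : Delta k (Set.range (isotropicParam i n)) = {u : F | ∃ σ : F, u = σ ^ 2} := by
    rw [← LinearMap.coe_range, ← Submodule.coe_toAddSubgroup, Delta_eq_image_normF,
      Submodule.coe_toAddSubgroup, LinearMap.coe_range, ← Set.range_comp]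
    ext u
    simp [normF_isotropicParam i _ hi, eq_comm]
  have hcard : Nat.card (Delta k (Set.range (isotropicParam i n))) = (q + 1) / 2 := by
    rw [hD, card_setOf_exists_eq_sq (hq ▸ hodd), hq]
  have hq1 : 1 < q := hq ▸ Fintype.one_lt_card
  refine ⟨?_, hD, hcard, by omega, fun h => ?_⟩
  · rw [Nat.card_range_of_injective (isotropicParam_injective i), Nat.card_eq_fintype_card,
      Fintype.card_prod, Fintype.card_fun, Fintype.card_fin, ← hq, pow_succ]
  · rw [h, Nat.card_univ, Nat.card_eq_fintype_card, ← hq] at hcard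
    omega
end

section
/- Let q be a power of an odd prime, let d = 2m ≥ 2 be an even integer, let k ≥ 2 be an integer, and suppose there exists i ∈ F_q with i² = −1. Let E = {(t_1, i t_1, t_2, i t_2, …, t_m, i t_m) : t_1, …, t_m ∈ F_q} ⊆ F_q^d. Then |E| = q^{d/2} and Δ_k(E) = {0}. -/
open Finset

/-! `E` is the image of the injective linear map `t ↦ (t₁, i t₁, …, t_m, i t_m)`, hence a subspace
with `q^m` elements, and `‖·‖` vanishes on it because `t² + (i t)² = 0`. Being a subspace, `E`
contains every `x¹ - x² - ⋯ - x^k` with `xʲ ∈ E`, so all these have norm `0`. -/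

def finPairEquiv (m : ℕ) : Fin m × Fin 2 ≃ Fin (2 * m) :=
  finProdFinEquiv.trans (finCongr (mul_comm m 2))

@[simp]
theorem finPairEquiv_apply_val {m : ℕ} (p : Fin m × Fin 2) :
    (finPairEquiv m p : ℕ) = 2 * p.1 + p.2 := by
  simp [finPairEquiv, add_comm]

theorem Delta_eq_singleton_zero_of_isotropic {F : Type*} [Field F] {d : ℕ} (k : ℕ)
    (S : AddSubgroup (Fin d → F)) (hS : ∀ x ∈ S, normF x = 0) :
    Delta k (S : Set (Fin d → F)) = {0} := by
  ext u
  constructor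
  · rintro ⟨y, x, hy, hx, rfl⟩
    exact hS _ (S.sub_mem hy (S.sum_mem fun j _ => hx j))
  · rintro rfl
    exact ⟨0, 0, S.zero_mem, fun _ => S.zero_mem, by simp [normF]⟩

section IsotropicEmbedding

variable {F : Type*} [Field F] (i : F) (m : ℕ)

/-- `t ↦ (t₁, i t₁, …, t_m, i t_m)`. -/
def isotropicEmbedding : (Fin m → F) →ₗ[F] (Fin (2 * m) → F) where
  toFun t n := ![1, i] ((finPairEquiv m).symm n).2 * t ((finPairEquiv m).symm n).1
  map_add' s t := by ext n; simp only [Pi.add_apply]; ring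
  map_smul' c t := by ext n; simp only [Pi.smul_apply, smul_eq_mul, RingHom.id_apply]; ring

variable {i m}

@[simp]
theorem isotropicEmbedding_apply_finPairEquiv (t : Fin m → F) (j : Fin m) (b : Fin 2) :
    isotropicEmbedding i m t (finPairEquiv m (j, b)) = ![1, i] b * t j := by
  simp [isotropicEmbedding]

theorem isotropicEmbedding_injective : Function.Injective (isotropicEmbedding i m) := by
  intro s t hst
  funext j
  simpa using congrFun hst (finPairEquiv m (j, 0))

theorem normF_isotropicEmbedding (hi : i ^ 2 = -1) (t : Fin m → F) :
    normF (isotropicEmbedding i m t) = 0 := by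
  rw [normF, ← (finPairEquiv m).sum_comp, Fintype.sum_prod_type]
  refine Finset.sum_eq_zero fun j _ => ?_
  simp [mul_pow, hi]

theorem range_isotropicEmbedding :
    Set.range (isotropicEmbedding i m) = {x | ∃ t : Fin m → F,
      ∀ j : Fin m, x ⟨2 * (j : ℕ), by have := j.isLt; omega⟩ = t j ∧
        x ⟨2 * (j : ℕ) + 1, by have := j.isLt; omega⟩ = i * t j} := by
  ext x
  refine exists_congr fun t => ?_
  have hcoord (j : Fin m) (b : Fin 2) :
      x (finPairEquiv m (j, b)) = x ⟨2 * (j : ℕ) + b, by have := j.isLt; omega⟩ :=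
    congrArg x (Fin.ext (finPairEquiv_apply_val _))
  simp only [funext_iff, ← (finPairEquiv m).forall_congr_right, Prod.forall,
    Fin.forall_fin_two, isotropicEmbedding_apply_finPairEquiv, hcoord]
  simp [forall_and, eq_comm]

end IsotropicEmbedding

/-- for even `d = 2m ≥ 2`, `k ≥ 2`, and `i² = -1`, the set
`E = {(t₁, it₁, …, t_m, it_m)}` has `|E| = q^{d/2}` and `Δ_k(E) = {0}`. -/
theorem stmt_1 {F : Type*} [Field F] [Fintype F] (q m k : ℕ)
    (hq : q = Fintype.card F)
    (i : F) (hi : i ^ 2 = -1)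
    (E : Set (Fin (2 * m) → F))
    (hE : E = {x | ∃ t : Fin m → F,
      ∀ j : Fin m, x ⟨2 * (j : ℕ), by have := j.isLt; omega⟩ = t j ∧
        x ⟨2 * (j : ℕ) + 1, by have := j.isLt; omega⟩ = i * t j}) :
    Nat.card E = q ^ m ∧ Delta k E = {0} := by
  rw [hE, ← range_isotropicEmbedding]
  refine ⟨?_, ?_⟩
  · rw [Nat.card_range_of_injective isotropicEmbedding_injective, Nat.card_fun, Nat.card_fin,
      Nat.card_eq_fintype_card, hq]
  · rw [← LinearMap.coe_range]
    refine Delta_eq_singleton_zero_of_isotropic k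
      (LinearMap.range (isotropicEmbedding i m)).toAddSubgroup ?_
    rintro _ ⟨t, rfl⟩
    exact normF_isotropicEmbedding hi t
end

section
/- For every integer d ≥ 2, every even integer k ≥ 4, and all constants c_1, c_2, c_3 > 0, there exists a constant C > 0 such that for every power q of an odd prime, every (c_1,c_2,c_3)-regular set V ⊆ F_q^d, and every E ⊆ V, one has Λ_k(E) ≤ C ( q^{d−1} Λ_{k−2}(E) + q^{−1} |E|^{k−1} ). -/
/-!
For `S ⊆ 𝔽_q^d` write `σ_S(η) = ∑_{x ∈ S} χ(η ⬝ᵥ x) = q^d Ŝ(-η)`. Orthogonality of characters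
gives `q^d Λ_{2m}(E) = ∑_η |σ_E(η)|^{2m}`. Peeling off one summand of the left-hand side of the
`(2n+2)`-energy equation and letting it range over `V ⊇ E` bounds `Λ_{2n+2}(E)` by the number of
solutions of `v + a₁ + ⋯ + aₙ = b₁ + ⋯ + b_{n+1}` with `v ∈ V` and `aᵢ, bⱼ ∈ E`, which is
`q^{-d} ∑_η σ_V(η) σ_E(η)^n conj(σ_E(η))^{n+1}`. The frequency `η = 0` contributes at most
`|V| |E|^{2n+1}`; for `η ≠ 0` regularity gives `|σ_V(η)| ≤ A = c₃ q^{(d-1)/2}`, and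
`A t^{2n+1} ≤ (A² t^{2n} + t^{2n+2}) / 2`. Absorbing the second half into the left-hand side gives
`q^d Λ_{2n+2}(E) ≤ 2 |V| |E|^{2n+1} + A² q^d Λ_{2n}(E)`, and `|V| ≤ c₂ q^{d-1}` finishes.
-/

open Finset

section CharacterSums

variable {F ι : Type*} [Field F] [Fintype ι] (χ : AddChar F ℂ)

lemma AddChar.map_sum_eq_prod {A M κ : Type*} [AddCommMonoid A] [CommMonoid M] (ψ : AddChar A M)
    (s : Finset κ) (f : κ → A) : ψ (∑ i ∈ s, f i) = ∏ i ∈ s, ψ (f i) :=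
  map_prod ψ.toMonoidHom (fun i => Multiplicative.ofAdd (f i)) s

lemma addChar_dotProduct_sub [Finite F] (η x y : ι → F) :
    χ (η ⬝ᵥ (x - y)) = χ (η ⬝ᵥ x) * starRingEnd ℂ (χ (η ⬝ᵥ y)) := by
  rw [dotProduct_sub, sub_eq_add_neg, AddChar.map_add_eq_mul, AddChar.map_neg_eq_conj]

noncomputable def expSum (s : Finset (ι → F)) (η : ι → F) : ℂ := ∑ x ∈ s, χ (η ⬝ᵥ x)

lemma norm_expSum_le [Finite F] (s : Finset (ι → F)) (η : ι → F) : ‖expSum χ s η‖ ≤ #s := by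
  refine (norm_sum_le _ _).trans ?_
  simp

lemma expSum_pow (s : Finset (ι → F)) (η : ι → F) (m : ℕ) :
    expSum χ s η ^ m = ∑ p ∈ Fintype.piFinset fun _ : Fin m => s, χ (η ⬝ᵥ ∑ i, p i) := by
  simp_rw [expSum, sum_pow', dotProduct_sum, AddChar.map_sum_eq_prod]

lemma sum_product_addChar_dotProduct (n : ℕ) (V E : Finset (ι → F)) (η : ι → F) :
    ∑ p ∈ V ×ˢ Fintype.piFinset (fun _ : Fin n => E), χ (η ⬝ᵥ (p.1 + ∑ i, p.2 i)) =
      expSum χ V η * expSum χ E η ^ n := by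
  simp_rw [sum_product, dotProduct_add, AddChar.map_add_eq_mul, ← mul_sum, expSum_pow, expSum,
    sum_mul]

variable {χ}

theorem sum_addChar_dotProduct [Fintype F] [DecidableEq F] [DecidableEq ι] (hχ : χ ≠ 1)
    (t : ι → F) :
    ∑ η : ι → F, χ (η ⬝ᵥ t) = if t = 0 then (Fintype.card F : ℂ) ^ Fintype.card ι else 0 := by
  simp_rw [dotProduct, AddChar.map_sum_eq_prod]
  rw [← Fintype.prod_sum fun i a => χ (a * t i)]
  simp_rw [AddChar.sum_mulShift _ (AddChar.IsPrimitive.of_ne_one hχ)]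
  split_ifs with ht
  · simp [ht]
  · obtain ⟨i, hi⟩ : ∃ i, t i ≠ 0 := Function.ne_iff.mp ht
    exact prod_eq_zero (mem_univ i) (by simp [hi])

theorem sum_mul_conj_eq_card_mul [Fintype F] [DecidableEq F] [DecidableEq ι] (hχ : χ ≠ 1)
    {α β : Type*} (s : Finset α) (t : Finset β) (f : α → ι → F) (g : β → ι → F) :
    ∑ η : ι → F, (∑ a ∈ s, χ (η ⬝ᵥ f a)) * starRingEnd ℂ (∑ b ∈ t, χ (η ⬝ᵥ g b)) =
      (Fintype.card F : ℂ) ^ Fintype.card ι * #{p ∈ s ×ˢ t | f p.1 = g p.2} := by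
  calc _ = ∑ p ∈ s ×ˢ t, ∑ η : ι → F, χ (η ⬝ᵥ (f p.1 - g p.2)) := by
        rw [sum_comm]
        simp only [map_sum, sum_mul_sum, sum_product, addChar_dotProduct_sub]
    _ = _ := by
        simp_rw [sum_addChar_dotProduct hχ, sub_eq_zero, ← sum_boole, mul_sum, mul_boole]

end CharacterSums

lemma mul_pow_two_mul_add_one_le {w A s : ℝ} (n : ℕ) (hwA : w ≤ A) (hs : 0 ≤ s) :
    w * s ^ (2 * n + 1) ≤ A ^ 2 / 2 * s ^ (2 * n) + s ^ (2 * (n + 1)) / 2 := by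
  have hsq : A ^ 2 / 2 * s ^ (2 * n) + s ^ (2 * (n + 1)) / 2 - A * s ^ (2 * n + 1) =
      s ^ (2 * n) * (A - s) ^ 2 / 2 := by ring
  have := mul_nonneg (pow_nonneg hs (2 * n)) (sq_nonneg (A - s))
  have : w * s ^ (2 * n + 1) ≤ A * s ^ (2 * n + 1) := by gcongr
  linarith

section Energy

variable {F : Type*} [Field F] [Fintype F] [DecidableEq F] {d : ℕ}

lemma energy_eq_card (m : ℕ) (E : Finset (Fin d → F)) :
    energy m (E : Set (Fin d → F)) =
      #{p ∈ (Fintype.piFinset fun _ : Fin m => E) ×ˢ Fintype.piFinset fun _ : Fin m => E |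
        ∑ i, p.1 i = ∑ i, p.2 i} := by
  rw [energy, Nat.card_eq_fintype_card, Fintype.card_subtype]
  congr 1
  ext p
  simp [Fintype.mem_piFinset, and_assoc]

theorem card_pow_mul_energy {χ : AddChar F ℂ} (hχ : χ ≠ 1) (m : ℕ) (E : Finset (Fin d → F)) :
    (Fintype.card F : ℝ) ^ d * energy m (E : Set (Fin d → F)) =
      ∑ η, ‖expSum χ E η‖ ^ (2 * m) := by
  have key := sum_mul_conj_eq_card_mul hχ (Fintype.piFinset fun _ : Fin m => E)
    (Fintype.piFinset fun _ : Fin m => E) (fun p => ∑ i, p i) (fun p => ∑ i, p i)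
  simp_rw [← expSum_pow, Fintype.card_fin, ← energy_eq_card, Complex.mul_conj,
    Complex.normSq_eq_norm_sq, norm_pow, ← pow_mul, mul_comm m 2] at key
  exact_mod_cast key.symm

lemma energy_succ_le_card (n : ℕ) {E V : Finset (Fin d → F)} (hEV : E ⊆ V) :
    energy (n + 1) (E : Set (Fin d → F)) ≤
      #{p ∈ (V ×ˢ Fintype.piFinset fun _ : Fin n => E) ×ˢ
          Fintype.piFinset fun _ : Fin (n + 1) => E | p.1.1 + ∑ i, p.1.2 i = ∑ i, p.2 i} := by
  rw [energy_eq_card]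
  refine card_le_card_of_injOn (fun p => ((p.1 0, Fin.tail p.1), p.2)) ?_ ?_
  · intro p hp
    simp only [coe_filter, mem_product, Fintype.mem_piFinset, Set.mem_ofPred_eq] at hp ⊢
    refine ⟨⟨⟨hEV (hp.1.1 0), fun i => hp.1.1 _⟩, hp.1.2⟩, ?_⟩
    rw [← hp.2, Fin.sum_univ_succ]
    rfl
  · rintro ⟨a, b⟩ - ⟨a', b'⟩ - h
    simp only [Prod.mk.injEq] at h
    obtain ⟨⟨h0, htail⟩, rfl⟩ := h
    rw [← Fin.cons_self_tail a, ← Fin.cons_self_tail a', h0, htail]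

theorem card_pow_mul_energy_succ_le {χ : AddChar F ℂ} (hχ : χ ≠ 1) (n : ℕ)
    {E V : Finset (Fin d → F)} (hEV : E ⊆ V) {A : ℝ} (hA : ∀ η ≠ 0, ‖expSum χ V η‖ ≤ A) :
    (Fintype.card F : ℝ) ^ d * energy (n + 1) (E : Set (Fin d → F)) ≤
      2 * #V * #E ^ (2 * n + 1) +
        A ^ 2 * ((Fintype.card F : ℝ) ^ d * energy n (E : Set (Fin d → F))) := by
  set S : (Fin d → F) → ℝ := fun η => ‖expSum χ E η‖
  have hcount : (Fintype.card F : ℝ) ^ d * energy (n + 1) (E : Set (Fin d → F)) ≤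
      ∑ η, ‖expSum χ V η‖ * S η ^ (2 * n + 1) := by
    have key := sum_mul_conj_eq_card_mul hχ (V ×ˢ Fintype.piFinset fun _ : Fin n => E)
      (Fintype.piFinset fun _ : Fin (n + 1) => E) (fun p => p.1 + ∑ i, p.2 i) (fun p => ∑ i, p i)
    simp_rw [sum_product_addChar_dotProduct, ← expSum_pow, Fintype.card_fin] at key
    calc _ ≤ (Fintype.card F : ℝ) ^ d * #{p ∈ (V ×ˢ Fintype.piFinset fun _ : Fin n => E) ×ˢ
          Fintype.piFinset fun _ : Fin (n + 1) => E | p.1.1 + ∑ i, p.1.2 i = ∑ i, p.2 i} := by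
          gcongr
          exact_mod_cast energy_succ_le_card n hEV
      _ = ‖∑ η, expSum χ V η * expSum χ E η ^ n * starRingEnd ℂ (expSum χ E η ^ (n + 1))‖ := by
          rw [key]
          simp
      _ ≤ _ := by
          refine (norm_sum_le _ _).trans (le_of_eq (sum_congr rfl fun η _ => ?_))
          simp only [norm_mul, norm_pow, Complex.norm_conj, S]
          ring
  have hpoint : ∀ η, ‖expSum χ V η‖ * S η ^ (2 * n + 1) ≤
      (if η = 0 then (#V * #E ^ (2 * n + 1) : ℝ) else 0) +
        (A ^ 2 / 2 * S η ^ (2 * n) + S η ^ (2 * (n + 1)) / 2) := by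
    intro η
    have hS : 0 ≤ S η := norm_nonneg _
    split_ifs with hη
    · subst hη
      have : ‖expSum χ V 0‖ * S 0 ^ (2 * n + 1) ≤ #V * #E ^ (2 * n + 1) := by
        gcongr
        exacts [norm_expSum_le χ V 0, norm_expSum_le χ E 0]
      have : 0 ≤ A ^ 2 / 2 * S 0 ^ (2 * n) + S 0 ^ (2 * (n + 1)) / 2 := by positivity
      linarith
    · rw [zero_add]
      exact mul_pow_two_mul_add_one_le n (hA η hη) hS
  have hsum := hcount.trans (sum_le_sum fun η _ => hpoint η)
  rw [sum_add_distrib, sum_ite_eq', if_pos (mem_univ _), sum_add_distrib, ← mul_sum, ← sum_div,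
    ← card_pow_mul_energy hχ, ← card_pow_mul_energy hχ] at hsum
  linarith

end Energy

section Regular

variable {F : Type*} [Field F] [Fintype F] {d : ℕ}

lemma expSum_eq_card_pow_mul_ftF (χ : AddChar F ℂ) (V : Finset (Fin d → F)) (η : Fin d → F) :
    expSum χ V η = (Fintype.card F : ℂ) ^ d * ftF χ (V : Set (Fin d → F)) (-η) := by
  rw [ftF, mul_inv_cancel_left₀ (by simp), sum_indicator_subset _ (subset_univ V)]
  simp [expSum, dotProduct]

lemma sq_rpow_sub_one_div_two {x : ℝ} (hx : 0 ≤ x) {d : ℕ} (hd : 1 ≤ d) :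
    (x ^ (((d : ℝ) - 1) / 2)) ^ 2 = x ^ (d - 1) := by
  rw [← Real.rpow_mul_natCast hx, ← Real.rpow_natCast, Nat.cast_sub hd]
  norm_num

theorem IsRegularVariety.norm_expSum_le {c1 c2 c3 : ℝ} {χ : AddChar F ℂ} {V : Finset (Fin d → F)}
    (hV : IsRegularVariety c1 c2 c3 χ (V : Set (Fin d → F))) {η : Fin d → F} (hη : η ≠ 0) :
    ‖expSum χ V η‖ ≤ c3 * (Fintype.card F : ℝ) ^ (((d : ℝ) - 1) / 2) := by
  have hq : (0 : ℝ) < Fintype.card F := by exact_mod_cast Fintype.card_pos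
  rw [expSum_eq_card_pow_mul_ftF, norm_mul, norm_pow, Complex.norm_natCast]
  calc _ ≤ (Fintype.card F : ℝ) ^ d * (c3 * (Fintype.card F : ℝ) ^ (-(((d : ℝ) + 1) / 2))) := by
        gcongr
        exact hV.2.2 _ (neg_ne_zero.mpr hη)
    _ = _ := by
        rw [mul_left_comm, ← Real.rpow_natCast, ← Real.rpow_add hq]
        ring_nf

theorem IsRegularVariety.energy_succ_le [DecidableEq F] {c1 c2 c3 : ℝ} {χ : AddChar F ℂ}
    (hχ : χ ≠ 1) (hd : 1 ≤ d) {V E : Finset (Fin d → F)}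
    (hV : IsRegularVariety c1 c2 c3 χ (V : Set (Fin d → F))) (hEV : E ⊆ V) (n : ℕ) :
    (energy (n + 1) (E : Set (Fin d → F)) : ℝ) ≤
      c3 ^ 2 * (Fintype.card F : ℝ) ^ (d - 1) * energy n (E : Set (Fin d → F)) +
        2 * c2 * #E ^ (2 * n + 1) / Fintype.card F := by
  have key := card_pow_mul_energy_succ_le hχ n hEV fun η hη => hV.norm_expSum_le hη
  set q : ℝ := (Fintype.card F : ℝ)
  have hq : 0 < q := Nat.cast_pos.mpr Fintype.card_pos
  have hqd : q ^ d = q ^ (d - 1) * q := by rw [← pow_succ, Nat.sub_add_cancel hd]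
  have hVcard : (#V : ℝ) ≤ c2 * q ^ (d - 1) := by simpa using hV.2.1
  rw [mul_pow, sq_rpow_sub_one_div_two hq.le hd] at key
  rw [← mul_le_mul_iff_right₀ (pow_pos hq d)]
  calc _ ≤ 2 * #V * #E ^ (2 * n + 1) +
          c3 ^ 2 * q ^ (d - 1) * (q ^ d * energy n (E : Set (Fin d → F))) := by linarith
    _ ≤ 2 * (c2 * q ^ (d - 1)) * #E ^ (2 * n + 1) +
          c3 ^ 2 * q ^ (d - 1) * (q ^ d * energy n (E : Set (Fin d → F))) := by gcongr
    _ = _ := by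
        rw [hqd]
        field_simp
        ring

end Regular

theorem stmt_10_general (d k : ℕ) (hd : 2 ≤ d) (hk : 4 ≤ k) (hke : Even k)
    (c1 c2 c3 : ℝ) (hc2 : 0 < c2) :
    ∃ C : ℝ, 0 < C ∧
      ∀ (F : Type) [Field F] [Fintype F], Odd (Fintype.card F) →
        ∀ χ : AddChar F ℂ, χ ≠ 1 →
          ∀ V : Set (Fin d → F), IsRegularVariety c1 c2 c3 χ V →
            ∀ E : Set (Fin d → F), E ⊆ V →
              (energy (k / 2) E : ℝ) ≤
                C * ((Fintype.card F : ℝ) ^ (d - 1) * (energy ((k - 2) / 2) E : ℝ) +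
                  (Nat.card E : ℝ) ^ (k - 1) / (Fintype.card F : ℝ)) := by
  obtain ⟨n, rfl⟩ : ∃ n, k = 2 * n + 2 := ⟨k / 2 - 1, by obtain ⟨m, rfl⟩ := hke; omega⟩
  refine ⟨2 * c2 + c3 ^ 2, by positivity, fun F _ _ _ χ hχ V hV E hEV => ?_⟩
  classical
  lift V to Finset (Fin d → F) using V.toFinite
  lift E to Finset (Fin d → F) using E.toFinite
  rw [show (2 * n + 2) / 2 = n + 1 by omega, show (2 * n + 2 - 2) / 2 = n by omega,
    show 2 * n + 2 - 1 = 2 * n + 1 by omega, Nat.card_coe_set_eq, Set.ncard_coe_finset]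
  have key := hV.energy_succ_le hχ (by omega) (coe_subset.mp hEV) n
  have hX : 0 ≤ (Fintype.card F : ℝ) ^ (d - 1) * energy n (E : Set (Fin d → F)) := by positivity
  have hY : 0 ≤ (#E : ℝ) ^ (2 * n + 1) / Fintype.card F := by positivity
  calc _ ≤ c3 ^ 2 * ((Fintype.card F : ℝ) ^ (d - 1) * energy n (E : Set (Fin d → F))) +
        2 * c2 * ((#E : ℝ) ^ (2 * n + 1) / Fintype.card F) := by
        convert key using 1
        ring
    _ ≤ _ := by linarith [mul_nonneg (sq_nonneg c3) hY, mul_nonneg hc2.le hX]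

/-- for `d ≥ 2`, even `k ≥ 4` and `c₁, c₂, c₃ > 0` there is `C > 0` such that
for every odd prime power `q`, every `(c₁,c₂,c₃)`-regular `V ⊆ 𝔽_q^d` and every `E ⊆ V`,
`Λ_k(E) ≤ C (q^{d-1} Λ_{k-2}(E) + q^{-1} |E|^{k-1})`. -/
theorem stmt_10 (d k : ℕ) (hd : 2 ≤ d) (hk : 4 ≤ k) (hke : Even k)
    (c1 c2 c3 : ℝ) (hc1 : 0 < c1) (hc2 : 0 < c2) (hc3 : 0 < c3) :
    ∃ C : ℝ, 0 < C ∧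
      ∀ (F : Type) [Field F] [Fintype F], Odd (Fintype.card F) →
        ∀ χ : AddChar F ℂ, χ ≠ 1 →
          ∀ V : Set (Fin d → F), IsRegularVariety c1 c2 c3 χ V →
            ∀ E : Set (Fin d → F), E ⊆ V →
              (energy (k / 2) E : ℝ) ≤
                C * ((Fintype.card F : ℝ) ^ (d - 1) * (energy ((k - 2) / 2) E : ℝ) +
                  (Nat.card E : ℝ) ^ (k - 1) / (Fintype.card F : ℝ)) :=
  stmt_10_general d k hd hk hke c1 c2 c3 hc2
end

section
/- For every integer d ≥ 2, every even integer k ≥ 6, and all constants c_1, c_2, c_3 > 0, there exists a constant C > 0 such that for every power q of an odd prime, every (c_1,c_2,c_3)-regular set V ⊆ F_q^d, and every E ⊆ V, one has Λ_k(E) ≤ C ( q^{(d−1)(k−4)/2} Λ_4(E) + q^{−1} Σ_{j=0}^{(k−6)/2} q^{(d−1)j} |E|^{k−1−2j} ). -/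
open Finset

/-!
With `S_A(ξ) = ∑_{a ∈ A} χ(ξ·a)`, orthogonality of characters gives
`∑_ξ |S_E(ξ)|^{2m} = q^d Λ_{2m}(E)`. Replacing one of the `2m + 2` copies of `E` by `V ⊇ E`
bounds `q^d Λ_{2m+2}(E)` by `|∑_ξ S_E(ξ)^{m+1} conj(S_E(ξ))^m conj(S_V(ξ))|`. The term `ξ = 0`
is `|E|^{2m+1} |V|`; for `ξ ≠ 0` regularity gives `|S_V(ξ)| ≤ c₃ q^{(d-1)/2}`, and
Cauchy–Schwarz bounds `∑_{ξ ≠ 0} |S_E(ξ)|^{2m+1}` by `q^d (Λ_{2m+2}(E) Λ_{2m}(E))^{1/2}`.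
Solving this quadratic inequality gives
`Λ_{2m+2}(E) ≤ 2c₂ |E|^{2m+1} / q + 4c₃² q^{d-1} Λ_{2m}(E)`, which is iterated down to `Λ_4(E)`.
-/

open ComplexConjugate

namespace EnergyEstimate

lemma le_two_mul_add_four_mul_sq_mul {a b κ e X : ℝ} (hb : 0 ≤ b) (he : 0 ≤ e)
    (hlin : a ≤ b + κ * X) (hsq : X ^ 2 ≤ a * e) : a ≤ 2 * b + 4 * κ ^ 2 * e := by
  rcases le_or_gt a (2 * b) with h | h
  · nlinarith [mul_nonneg (sq_nonneg κ) he]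
  · have ha : 0 < a := by linarith
    have hlt : a < 2 * (κ * X) := by linarith
    have : a ^ 2 ≤ 4 * κ ^ 2 * (a * e) := by
      nlinarith [pow_le_pow_left₀ ha.le hlt.le 2]
    nlinarith

lemma sq_pow_mul_mul_rpow_neg {q : ℝ} (hq : 0 < q) {d : ℕ} (hd : 1 ≤ d) (c : ℝ) :
    (q ^ d * (c * q ^ (-(((d : ℝ) + 1) / 2)))) ^ 2 = c ^ 2 * q ^ (d - 1) := by
  have hrpow : (q ^ (-(((d : ℝ) + 1) / 2))) ^ 2 * q ^ (d + 1) = 1 := by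
    rw [← Real.rpow_natCast, ← Real.rpow_mul hq.le, ← Real.rpow_natCast q (d + 1),
      ← Real.rpow_add hq]
    push_cast
    ring_nf
    exact Real.rpow_zero q
  have hsq : (q ^ d) ^ 2 = q ^ (d - 1) * q ^ (d + 1) := by
    rw [← pow_mul, ← pow_add]
    congr 1
    omega
  calc _ = c ^ 2 * q ^ (d - 1) * ((q ^ (-(((d : ℝ) + 1) / 2))) ^ 2 * q ^ (d + 1)) := by
        rw [mul_pow, mul_pow, hsq]; ring
    _ = _ := by rw [hrpow, mul_one]

lemma le_pow_mul_of_le_add_mul {v w : ℕ → ℝ} {a b r q : ℝ} (ha : 0 ≤ a) (hb : 0 ≤ b)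
    (hr : 0 ≤ r) (hq : 0 < q) (hv : 0 ≤ v 0) (hw : ∀ k, 0 ≤ w k)
    (h : ∀ n, v (n + 1) ≤ a * w (n + 1) / q + b * r * v n) (n : ℕ) :
    v n ≤ (a + b + 1) ^ n * (r ^ n * v 0 + (∑ j ∈ range n, r ^ j * w (n - j)) / q) := by
  induction n with
  | zero => simp
  | succ n ih =>
    set C := a + b + 1
    set T := ∑ j ∈ range n, r ^ j * w (n - j)
    have hT : 0 ≤ T := sum_nonneg fun j _ => mul_nonneg (pow_nonneg hr j) (hw _)
    have hsum : ∑ j ∈ range (n + 1), r ^ j * w (n + 1 - j) = r * T + w (n + 1) := by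
      rw [sum_range_succ', mul_sum]
      simp only [Nat.add_sub_add_right, pow_succ, pow_zero, one_mul, Nat.sub_zero]
      congr 1
      exact sum_congr rfl fun j _ => by ring
    have hC1 : 1 ≤ C := by linarith
    have haC : a ≤ C ^ (n + 1) := (by linarith : a ≤ C).trans (le_self_pow₀ hC1 (by omega))
    have hbC : b * C ^ n ≤ C ^ (n + 1) := by
      rw [pow_succ']; exact mul_le_mul_of_nonneg_right (by linarith) (by positivity)
    have hX : 0 ≤ r ^ n * v 0 + T / q := by positivity
    calc v (n + 1) ≤ a * w (n + 1) / q + b * r * (C ^ n * (r ^ n * v 0 + T / q)) :=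
          (h n).trans (by gcongr)
      _ = a * (w (n + 1) / q) + (b * C ^ n) * (r * (r ^ n * v 0 + T / q)) := by ring
      _ ≤ C ^ (n + 1) * (w (n + 1) / q) + C ^ (n + 1) * (r * (r ^ n * v 0 + T / q)) := by
          gcongr; exact div_nonneg (hw _) hq.le
      _ = C ^ (n + 1) * (r ^ (n + 1) * v 0 + (r * T + w (n + 1)) / q) := by ring
      _ = _ := by rw [hsum]

section Fourier

lemma addChar_map_sum {A M ι : Type*} [AddCommMonoid A] [CommMonoid M] (χ : AddChar A M)
    (s : Finset ι) (f : ι → A) : χ (∑ i ∈ s, f i) = ∏ i ∈ s, χ (f i) := by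
  induction s using Finset.cons_induction with
  | empty => simp
  | cons a s ha ih => rw [sum_cons, prod_cons, AddChar.map_add_eq_mul, ih]

variable {F : Type*} [Field F] {n : Type*} [Fintype n] (χ : AddChar F ℂ)

def expSum (A : Finset (n → F)) (ξ : n → F) : ℂ := ∑ a ∈ A, χ (ξ ⬝ᵥ a)

lemma prod_expSum {ι : Type*} [Fintype ι] [DecidableEq ι] (C : ι → Finset (n → F))
    (ξ : n → F) : ∏ i, expSum χ (C i) ξ = ∑ x ∈ Fintype.piFinset C, χ (ξ ⬝ᵥ ∑ i, x i) := by
  simp only [expSum, prod_univ_sum, dotProduct_sum, addChar_map_sum]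

@[simp]
lemma expSum_zero (A : Finset (n → F)) : expSum χ A 0 = #A := by simp [expSum]

variable [DecidableEq F]

def sumEqCount {ι ι' : Type*} [Fintype ι] [DecidableEq ι] [Fintype ι'] [DecidableEq ι']
    (C : ι → Finset (n → F)) (D : ι' → Finset (n → F)) : ℕ :=
  #{p ∈ Fintype.piFinset C ×ˢ Fintype.piFinset D | ∑ i, p.1 i = ∑ j, p.2 j}

variable [Fintype F] [DecidableEq n]

lemma sum_addChar_dotProduct (hχ : χ ≠ 1) (w : n → F) :
    ∑ ξ : n → F, χ (ξ ⬝ᵥ w) = if w = 0 then (Fintype.card F : ℂ) ^ Fintype.card n else 0 := by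
  calc ∑ ξ : n → F, χ (ξ ⬝ᵥ w) = ∏ i, ∑ t, χ (t * w i) := by
        simp only [Fintype.prod_sum, dotProduct, addChar_map_sum]
    _ = ∏ i, if w i = 0 then (Fintype.card F : ℂ) else 0 := by
        simp only [AddChar.sum_mulShift _ (AddChar.IsPrimitive.of_ne_one hχ), Nat.cast_ite,
          Nat.cast_zero]
    _ = _ := by simp [Fintype.prod_ite_zero, funext_iff]

theorem sum_prod_expSum_mul_prod_conj {ι ι' : Type*} [Fintype ι] [DecidableEq ι] [Fintype ι']
    [DecidableEq ι'] (hχ : χ ≠ 1) (C : ι → Finset (n → F)) (D : ι' → Finset (n → F)) :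
    ∑ ξ, (∏ i, expSum χ (C i) ξ) * ∏ j, conj (expSum χ (D j) ξ) =
      (Fintype.card F : ℂ) ^ Fintype.card n * sumEqCount C D := by
  have expand : ∀ ξ, (∏ i, expSum χ (C i) ξ) * ∏ j, conj (expSum χ (D j) ξ) =
      ∑ p ∈ Fintype.piFinset C ×ˢ Fintype.piFinset D, χ (ξ ⬝ᵥ (∑ i, p.1 i - ∑ j, p.2 j)) := by
    intro ξ
    simp only [← map_prod, prod_expSum, map_sum, sum_mul_sum, sum_product,
      ← AddChar.map_neg_eq_conj, sub_eq_add_neg, dotProduct_add, dotProduct_neg,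
      AddChar.map_add_eq_mul]
  rw [sum_congr rfl fun ξ _ => expand ξ, sum_comm]
  simp only [sum_addChar_dotProduct χ hχ, sub_eq_zero]
  rw [sum_ite, sum_const_zero, add_zero, sum_const, nsmul_eq_mul, sumEqCount, mul_comm]

theorem card_pow_mul_sumEqCount_le (hχ : χ ≠ 1) {A B : Finset (n → F)} {K : ℝ}
    (hK : ∀ ξ ≠ 0, ‖expSum χ B ξ‖ ≤ K) (m : ℕ) :
    (Fintype.card F : ℝ) ^ Fintype.card n *
        sumEqCount (fun _ : Fin (m + 1) => A) (Fin.cons B fun _ : Fin m => A) ≤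
      (#A : ℝ) ^ (2 * m + 1) * #B + K * ∑ ξ ∈ univ.erase 0, ‖expSum χ A ξ‖ ^ (2 * m + 1) := by
  have hsum := sum_prod_expSum_mul_prod_conj χ hχ (fun _ : Fin (m + 1) => A)
    (Fin.cons B fun _ : Fin m => A)
  simp only [prod_const, card_univ, Fintype.card_fin, Fin.prod_univ_succ, Fin.cons_zero,
    Fin.cons_succ] at hsum
  have hnorm : ∀ ξ, ‖expSum χ A ξ ^ (m + 1) * (conj (expSum χ B ξ) * conj (expSum χ A ξ) ^ m)‖
      = ‖expSum χ A ξ‖ ^ (2 * m + 1) * ‖expSum χ B ξ‖ := fun ξ => by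
    simp only [norm_mul, norm_pow, Complex.norm_conj]
    ring
  calc (Fintype.card F : ℝ) ^ Fintype.card n *
        sumEqCount (fun _ : Fin (m + 1) => A) (Fin.cons B fun _ : Fin m => A)
      = ‖∑ ξ, expSum χ A ξ ^ (m + 1) * (conj (expSum χ B ξ) * conj (expSum χ A ξ) ^ m)‖ := by
        rw [hsum]; simp
    _ ≤ ∑ ξ, ‖expSum χ A ξ‖ ^ (2 * m + 1) * ‖expSum χ B ξ‖ :=
        (norm_sum_le _ _).trans_eq (by simp only [hnorm])
    _ = ‖expSum χ A 0‖ ^ (2 * m + 1) * ‖expSum χ B 0‖ +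
          ∑ ξ ∈ univ.erase 0, ‖expSum χ A ξ‖ ^ (2 * m + 1) * ‖expSum χ B ξ‖ :=
        (add_sum_erase _ _ (mem_univ 0)).symm
    _ ≤ _ := by
        rw [expSum_zero, expSum_zero, mul_sum]
        refine add_le_add (by simp) (sum_le_sum fun ξ hξ => ?_)
        rw [mul_comm K]
        exact mul_le_mul_of_nonneg_left (hK ξ (ne_of_mem_erase hξ)) (by positivity)

end Fourier

section Energy

variable {F : Type*} [Field F] [DecidableEq F] {d : ℕ}

lemma energy_coe_eq_sumEqCount (A : Finset (Fin d → F)) (m : ℕ) :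
    energy m (A : Set (Fin d → F)) = sumEqCount (fun _ : Fin m => A) (fun _ : Fin m => A) := by
  rw [energy, sumEqCount, ← Nat.card_eq_finsetCard]
  exact Nat.card_congr <|
    Equiv.subtypeEquivRight fun p => by simp [Fintype.mem_piFinset, and_assoc]

lemma energy_succ_le_sumEqCount {A B : Finset (Fin d → F)} (hAB : A ⊆ B) (m : ℕ) :
    energy (m + 1) (A : Set (Fin d → F)) ≤
      sumEqCount (fun _ : Fin (m + 1) => A) (Fin.cons B fun _ : Fin m => A) := by
  rw [energy_coe_eq_sumEqCount]
  refine card_le_card (filter_subset_filter _ (product_subset_product subset_rfl ?_))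
  exact Fintype.piFinset_subset _ _ fun j => Fin.cases hAB (fun _ => subset_rfl) j

variable [Fintype F] (χ : AddChar F ℂ)

lemma sum_norm_expSum_pow (hχ : χ ≠ 1) (A : Finset (Fin d → F)) (m : ℕ) :
    ∑ ξ, ‖expSum χ A ξ‖ ^ (2 * m) =
      (Fintype.card F : ℝ) ^ d * energy m (A : Set (Fin d → F)) := by
  apply Complex.ofReal_injective
  have h := sum_prod_expSum_mul_prod_conj χ hχ (fun _ : Fin m => A) (fun _ : Fin m => A)
  simp only [prod_const, card_univ, Fintype.card_fin, ← mul_pow, Complex.mul_conj,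
    Complex.normSq_eq_norm_sq] at h
  push_cast
  rw [energy_coe_eq_sumEqCount, ← h]
  simp [pow_mul]

lemma sq_sum_norm_expSum_pow_le (hχ : χ ≠ 1) (A : Finset (Fin d → F)) (s : Finset (Fin d → F))
    (m : ℕ) :
    (∑ ξ ∈ s, ‖expSum χ A ξ‖ ^ (2 * m + 1)) ^ 2 ≤
      ((Fintype.card F : ℝ) ^ d * energy (m + 1) (A : Set (Fin d → F))) *
        ((Fintype.card F : ℝ) ^ d * energy m (A : Set (Fin d → F))) := by
  rw [← sum_norm_expSum_pow χ hχ, ← sum_norm_expSum_pow χ hχ]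
  calc (∑ ξ ∈ s, ‖expSum χ A ξ‖ ^ (2 * m + 1)) ^ 2
      = (∑ ξ ∈ s, ‖expSum χ A ξ‖ ^ (m + 1) * ‖expSum χ A ξ‖ ^ m) ^ 2 := by
        simp only [← pow_add]; ring_nf
    _ ≤ (∑ ξ ∈ s, (‖expSum χ A ξ‖ ^ (m + 1)) ^ 2) * ∑ ξ ∈ s, (‖expSum χ A ξ‖ ^ m) ^ 2 :=
        sum_mul_sq_le_sq_mul_sq _ _ _
    _ ≤ (∑ ξ, (‖expSum χ A ξ‖ ^ (m + 1)) ^ 2) * ∑ ξ, (‖expSum χ A ξ‖ ^ m) ^ 2 := by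
        gcongr <;> exact subset_univ s
    _ = _ := by simp only [← pow_mul, mul_comm _ 2]

theorem energy_succ_le (hχ : χ ≠ 1) {A B : Finset (Fin d → F)} (hAB : A ⊆ B) {K : ℝ}
    (hK : ∀ ξ ≠ 0, ‖expSum χ B ξ‖ ≤ K) (m : ℕ) :
    (Fintype.card F : ℝ) ^ d * energy (m + 1) (A : Set (Fin d → F)) ≤
      2 * ((#A : ℝ) ^ (2 * m + 1) * #B) +
        4 * K ^ 2 * ((Fintype.card F : ℝ) ^ d * energy m (A : Set (Fin d → F))) := by
  refine le_two_mul_add_four_mul_sq_mul (by positivity) (by positivity) ?_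
    (sq_sum_norm_expSum_pow_le χ hχ A (univ.erase 0) m)
  have hcount := card_pow_mul_sumEqCount_le χ hχ (A := A) hK m
  rw [Fintype.card_fin] at hcount
  refine le_trans ?_ hcount
  gcongr
  exact_mod_cast energy_succ_le_sumEqCount hAB m

lemma norm_expSum_eq_mul_norm_ftF (B : Finset (Fin d → F)) (ξ : Fin d → F) :
    ‖expSum χ B ξ‖ = (Fintype.card F : ℝ) ^ d * ‖ftF χ (B : Set (Fin d → F)) ξ‖ := by
  have hq : (Fintype.card F : ℂ) ^ d ≠ 0 := by simp
  have hft : (Fintype.card F : ℂ) ^ d * ftF χ (B : Set (Fin d → F)) ξ = conj (expSum χ B ξ) := by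
    simp only [ftF, ← mul_assoc, mul_inv_cancel₀ hq, one_mul, expSum, map_sum,
      ← AddChar.map_neg_eq_conj, Set.indicator_apply, mem_coe, sum_ite_mem, univ_inter,
      dotProduct]
  rw [← Complex.norm_conj, ← hft, norm_mul, norm_pow, Complex.norm_natCast]

theorem energy_succ_le_of_isRegularVariety (hχ : χ ≠ 1) (hd : 1 ≤ d) {c1 c2 c3 : ℝ}
    {A B : Finset (Fin d → F)} (hB : IsRegularVariety c1 c2 c3 χ (B : Set (Fin d → F)))
    (hAB : A ⊆ B) (m : ℕ) :
    (energy (m + 1) (A : Set (Fin d → F)) : ℝ) ≤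
      2 * c2 * (#A : ℝ) ^ (2 * m + 1) / Fintype.card F +
        4 * c3 ^ 2 * (Fintype.card F : ℝ) ^ (d - 1) * energy m (A : Set (Fin d → F)) := by
  obtain ⟨-, hcard, hft⟩ := hB
  simp only [Nat.card_coe_set_eq, Set.ncard_coe_finset] at hcard
  have hK : ∀ ξ ≠ 0, ‖expSum χ B ξ‖ ≤
      (Fintype.card F : ℝ) ^ d * (c3 * (Fintype.card F : ℝ) ^ (-(((d : ℝ) + 1) / 2))) :=
    fun ξ hξ => by
      rw [norm_expSum_eq_mul_norm_ftF]
      exact mul_le_mul_of_nonneg_left (hft ξ hξ) (by positivity)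
  have hmain := energy_succ_le χ hχ hAB hK m
  have hq : 0 < (Fintype.card F : ℝ) := by simp [Fintype.card_pos]
  generalize (Fintype.card F : ℝ) = q at hq hcard hmain ⊢
  rw [sq_pow_mul_mul_rpow_neg hq hd] at hmain
  have hqd : q ^ d = q ^ (d - 1) * q := by rw [← pow_succ, Nat.sub_add_cancel hd]
  refine le_of_mul_le_mul_left (hmain.trans ?_) (pow_pos hq d)
  calc _ ≤ 2 * ((#A : ℝ) ^ (2 * m + 1) * (c2 * q ^ (d - 1))) +
        4 * (c3 ^ 2 * q ^ (d - 1)) * (q ^ d * energy m (A : Set (Fin d → F))) := by gcongr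
    _ = _ := by
      rw [hqd]
      field_simp

theorem energy_add_two_le_of_isRegularVariety (hχ : χ ≠ 1) (hd : 1 ≤ d) {c1 c2 c3 : ℝ}
    (hc2 : 0 ≤ c2) {A B : Finset (Fin d → F)}
    (hB : IsRegularVariety c1 c2 c3 χ (B : Set (Fin d → F))) (hAB : A ⊆ B) (n : ℕ) :
    (energy (n + 2) (A : Set (Fin d → F)) : ℝ) ≤ (2 * c2 + 4 * c3 ^ 2 + 1) ^ n *
      ((Fintype.card F : ℝ) ^ ((d - 1) * n) * energy 2 (A : Set (Fin d → F)) +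
        (∑ j ∈ range n, (Fintype.card F : ℝ) ^ ((d - 1) * j) * (#A : ℝ) ^ (2 * (n - j) + 3)) /
          Fintype.card F) := by
  have h := le_pow_mul_of_le_add_mul (v := fun n => (energy (n + 2) (A : Set (Fin d → F)) : ℝ))
    (w := fun n => (#A : ℝ) ^ (2 * n + 3)) (a := 2 * c2) (b := 4 * c3 ^ 2)
    (r := (Fintype.card F : ℝ) ^ (d - 1)) (q := Fintype.card F) (by positivity) (by positivity)
    (by positivity) (by simp [Fintype.card_pos]) (by positivity) (fun _ => by positivity)
    (fun n => by
      simpa [mul_add, add_assoc] using energy_succ_le_of_isRegularVariety χ hχ hd hB hAB (n + 2))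
    n
  simpa only [← pow_mul, zero_add] using h

end Energy

end EnergyEstimate

open EnergyEstimate in
theorem stmt_12_general (d k : ℕ) (hd : 2 ≤ d) (hk : 6 ≤ k) (hke : Even k)
    (c1 c2 c3 : ℝ) (hc2 : 0 < c2) :
    ∃ C : ℝ, 0 < C ∧
      ∀ (F : Type) [Field F] [Fintype F], Odd (Fintype.card F) →
        ∀ χ : AddChar F ℂ, χ ≠ 1 →
          ∀ V : Set (Fin d → F), IsRegularVariety c1 c2 c3 χ V →
            ∀ E : Set (Fin d → F), E ⊆ V →
              (energy (k / 2) E : ℝ) ≤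
                C * ((Fintype.card F : ℝ) ^ ((d - 1) * (k - 4) / 2) * (energy 2 E : ℝ) +
                  (∑ j ∈ Finset.range ((k - 6) / 2 + 1),
                    (Fintype.card F : ℝ) ^ ((d - 1) * j) *
                      (Nat.card E : ℝ) ^ (k - 1 - 2 * j)) / (Fintype.card F : ℝ)) := by
  refine ⟨(2 * c2 + 4 * c3 ^ 2 + 1) ^ (k / 2 - 2), by positivity, ?_⟩
  intro F _ _ _ χ hχ V hV E hEV
  classical
  obtain ⟨B, rfl⟩ := V.toFinite.exists_finset_coe
  obtain ⟨A, rfl⟩ := E.toFinite.exists_finset_coe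
  obtain ⟨t, rfl⟩ := hke
  have h := energy_add_two_le_of_isRegularVariety χ hχ (by omega) hc2.le hV
    (Finset.coe_subset.1 hEV) (t - 2)
  have hdeg : (d - 1) * (t + t - 4) / 2 = (d - 1) * (t - 2) := by
    rw [show t + t - 4 = 2 * (t - 2) by omega, mul_left_comm, Nat.mul_div_cancel_left _ two_pos]
  rw [show (t + t) / 2 - 2 = t - 2 by omega, show (t + t) / 2 = t - 2 + 2 by omega, hdeg,
    show (t + t - 6) / 2 + 1 = t - 2 by omega, Nat.card_coe_set_eq, Set.ncard_coe_finset]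
  convert h using 5 with j hj
  rw [mem_range] at hj
  congr 2
  omega

/-- for `d ≥ 2`, even `k ≥ 6` and `c₁, c₂, c₃ > 0` there is `C > 0` such that
for every odd prime power `q`, every `(c₁,c₂,c₃)`-regular `V ⊆ 𝔽_q^d` and every `E ⊆ V`,
`Λ_k(E) ≤ C (q^{(d-1)(k-4)/2} Λ_4(E) + q^{-1} Σ_{j=0}^{(k-6)/2} q^{(d-1)j} |E|^{k-1-2j})`. -/
theorem stmt_12 (d k : ℕ) (hd : 2 ≤ d) (hk : 6 ≤ k) (hke : Even k)
    (c1 c2 c3 : ℝ) (hc1 : 0 < c1) (hc2 : 0 < c2) (hc3 : 0 < c3) :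
    ∃ C : ℝ, 0 < C ∧
      ∀ (F : Type) [Field F] [Fintype F], Odd (Fintype.card F) →
        ∀ χ : AddChar F ℂ, χ ≠ 1 →
          ∀ V : Set (Fin d → F), IsRegularVariety c1 c2 c3 χ V →
            ∀ E : Set (Fin d → F), E ⊆ V →
              (energy (k / 2) E : ℝ) ≤
                C * ((Fintype.card F : ℝ) ^ ((d - 1) * (k - 4) / 2) * (energy 2 E : ℝ) +
                  (∑ j ∈ Finset.range ((k - 6) / 2 + 1),
                    (Fintype.card F : ℝ) ^ ((d - 1) * j) *
                      (Nat.card E : ℝ) ^ (k - 1 - 2 * j)) / (Fintype.card F : ℝ)) :=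
  stmt_12_general d k hd hk hke c1 c2 c3 hc2
end
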